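/- For g, h > 0, define φ(g,h) := (h²−g²)/(2 log(h/g)) if g < h and φ(g,h) := gh if g ≥ h. Then ψ_{B,g,h}(λ) ≤ (φ(g,h)/(gh))·(λ²/2) for all λ ≥ 0, with equality occurring in the dual formulation at u = h − g when g < h. -/

import Mathlib

/-- The Kearns-Saul constant `φ(g,h)`. -/
noncomputable def ksPhi (g h : ℝ) : ℝ :=
  if g < h then (h ^ 2 - g ^ 2) / (2 * Real.log (h / g)) else g * h

/-- The Bernoulli potential `ψ_{B,g,h}`. -/
noncomputable def psiB (g h l : ℝ) : ℝ :=
  1 / (g * h) * Real.log ((g * Real.exp (h * l) + h * Real.exp (-(g * l))) / (g + h))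

/-!
Put `a = g/(g+h)` and `s = (g+h)λ`; then `gh·ψ_{B,g,h}(λ)` is the log-MGF `log E e^{sX}` of a
centred Bernoulli(`a`) variable. At the exponentially tilted parameter `p`,
`log E e^{sX} = (p-a)s - KL(p‖a)`, so a bound `KL(p‖a) ≥ c(p-a)²` for `p ≥ a` gives
`log E e^{sX} ≤ s²/(4c)`, and `c = (g+h)²/(2φ)` is exactly what is needed.

The gap `KL(p‖a) - c(p-a)²` has second derivative `1/(p(1-p)) - 2c`. For `a ≥ 1/2` and
`c = 1/(2a(1-a))` it is convex on `[a,1)` and vanishes to second order at `a`. For `a < 1/2` and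
`c = log((1-a)/a)/(1-2a)` (Ordentlich–Weinberger) it is convex near `0` and `1`, concave in
between, and vanishes to second order at both `a` and `1-a`, which lie in the convex pieces
because `2 ≤ c ≤ 1/(2a(1-a))` (both from the series of `log((1+y)/(1-y))`, `y = 1-2a`); hence it
is nonnegative on `(0,1)`. The tilt at `s = 2 log((1-a)/a)` is `1-a`, which gives equality.
-/

open Real Set

theorem two_mul_le_log_one_add_sub_log_one_sub {y : ℝ} (hy0 : 0 ≤ y) (hy1 : y < 1) :
    2 * y ≤ log (1 + y) - log (1 - y) := by
  have hs := hasSum_log_sub_log_of_abs_lt_one (abs_lt.2 ⟨by linarith, hy1⟩)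
  simpa using le_hasSum hs 0 (fun k _ => by positivity)

theorem log_one_add_sub_log_one_sub_le {y : ℝ} (hy0 : 0 ≤ y) (hy1 : y < 1) :
    log (1 + y) - log (1 - y) ≤ 2 * y / (1 - y ^ 2) := by
  have hgeom : HasSum (fun k : ℕ => 2 * y * (y ^ 2) ^ k) (2 * y / (1 - y ^ 2)) := by
    simpa [div_eq_mul_inv] using
      (hasSum_geometric_of_lt_one (sq_nonneg y) (by nlinarith)).mul_left (2 * y)
  refine hasSum_le (fun k => ?_) (hasSum_log_sub_log_of_abs_lt_one (abs_lt.2 ⟨by linarith, hy1⟩))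
    hgeom
  calc 2 * (1 / (2 * k + 1)) * y ^ (2 * k + 1) ≤ 2 * 1 * y ^ (2 * k + 1) := by
        gcongr; exact div_le_one_of_le₀ (by linarith [k.cast_nonneg (α := ℝ)]) (by positivity)
    _ = 2 * y * (y ^ 2) ^ k := by ring

theorem ConvexOn.isMinOn_of_hasDerivAt_eq_zero {S : Set ℝ} {f : ℝ → ℝ} {x : ℝ}
    (hf : ConvexOn ℝ S f) (hx : x ∈ S) (hd : HasDerivAt f 0 x) : IsMinOn f S x := by
  intro y hy
  change f x ≤ f y
  rcases lt_trichotomy x y with hxy | rfl | hxy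
  · have := hf.le_slope_of_hasDerivAt hx hy hxy hd
    rw [slope_def_field, le_div_iff₀ (sub_pos.2 hxy)] at this
    linarith
  · exact le_rfl
  · have := hf.slope_le_of_hasDerivAt hy hx hxy hd
    rw [slope_def_field, div_le_iff₀ (sub_pos.2 hxy)] at this
    linarith

noncomputable def binKL (a p : ℝ) : ℝ :=
  p * (log p - log a) + (1 - p) * (log (1 - p) - log (1 - a))

noncomputable def pinskerGap (a c p : ℝ) : ℝ := binKL a p - c * (p - a) ^ 2

section PinskerGap

variable {a c p : ℝ}

lemma hasDerivAt_pinskerGap (hp0 : 0 < p) (hp1 : p < 1) :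
    HasDerivAt (pinskerGap a c)
      (log p - log a - (log (1 - p) - log (1 - a)) - 2 * c * (p - a)) p := by
  have hq : HasDerivAt (fun q : ℝ => 1 - q) (-1) p := (hasDerivAt_id p).const_sub 1
  have hlog : HasDerivAt (fun q : ℝ => log q - log a) p⁻¹ p :=
    (hasDerivAt_log hp0.ne').sub_const _
  have hlog' : HasDerivAt (fun q : ℝ => log (1 - q) - log (1 - a)) ((1 - p)⁻¹ * -1) p :=
    ((hasDerivAt_log (sub_pos.2 hp1).ne').comp p hq).sub_const _
  have hsq : HasDerivAt (fun q : ℝ => c * (q - a) ^ 2) (c * (2 * (p - a))) p := by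
    simpa using (((hasDerivAt_id p).sub_const a).pow 2).const_mul c
  refine (((hasDerivAt_id p).mul hlog).add (hq.mul hlog')).sub hsq |>.congr_deriv ?_
  simp only [id]
  field_simp [(sub_pos.2 hp1).ne']
  ring

lemma hasDerivAt_pinskerGap_deriv (hp0 : 0 < p) (hp1 : p < 1) :
    HasDerivAt (fun q => log q - log a - (log (1 - q) - log (1 - a)) - 2 * c * (q - a))
      (p⁻¹ + (1 - p)⁻¹ - 2 * c) p := by
  have hlog' : HasDerivAt (fun q : ℝ => log (1 - q)) ((1 - p)⁻¹ * -1) p :=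
    (hasDerivAt_log (sub_pos.2 hp1).ne').comp p ((hasDerivAt_id p).const_sub 1)
  refine ((((hasDerivAt_log hp0.ne').sub_const _).sub (hlog'.sub_const _)).sub
    (((hasDerivAt_id p).sub_const a).const_mul (2 * c))).congr_deriv ?_
  simp

lemma inv_add_inv_one_sub_sub_eq_div (hp0 : 0 < p) (hp1 : p < 1) :
    p⁻¹ + (1 - p)⁻¹ - 2 * c = (1 - 2 * c * (p * (1 - p))) / (p * (1 - p)) := by
  field_simp [(sub_pos.2 hp1).ne']
  ring

lemma convexOn_pinskerGap {S : Set ℝ} (hS : Convex ℝ S) (hS01 : S ⊆ Ioo 0 1)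
    (hcS : ∀ t ∈ S, 2 * c * (t * (1 - t)) ≤ 1) : ConvexOn ℝ S (pinskerGap a c) := by
  have hS' : ∀ t ∈ interior S, t ∈ Ioo (0 : ℝ) 1 ∧ t ∈ S :=
    fun t ht => ⟨hS01 (interior_subset ht), interior_subset ht⟩
  refine convexOn_of_hasDerivWithinAt2_nonneg hS
    (fun t ht => (hasDerivAt_pinskerGap (hS01 ht).1 (hS01 ht).2).continuousAt.continuousWithinAt)
    (fun t ht => (hasDerivAt_pinskerGap (hS' t ht).1.1 (hS' t ht).1.2).hasDerivWithinAt)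
    (fun t ht => (hasDerivAt_pinskerGap_deriv (hS' t ht).1.1 (hS' t ht).1.2).hasDerivWithinAt)
    (fun t ht => ?_)
  obtain ⟨⟨ht0, ht1⟩, htS⟩ := hS' t ht
  rw [inv_add_inv_one_sub_sub_eq_div ht0 ht1]
  exact div_nonneg (sub_nonneg.2 (hcS t htS)) (mul_pos ht0 (sub_pos.2 ht1)).le

lemma concaveOn_pinskerGap {S : Set ℝ} (hS : Convex ℝ S) (hS01 : S ⊆ Ioo 0 1)
    (hcS : ∀ t ∈ S, 1 ≤ 2 * c * (t * (1 - t))) : ConcaveOn ℝ S (pinskerGap a c) := by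
  have hS' : ∀ t ∈ interior S, t ∈ Ioo (0 : ℝ) 1 ∧ t ∈ S :=
    fun t ht => ⟨hS01 (interior_subset ht), interior_subset ht⟩
  refine concaveOn_of_hasDerivWithinAt2_nonpos hS
    (fun t ht => (hasDerivAt_pinskerGap (hS01 ht).1 (hS01 ht).2).continuousAt.continuousWithinAt)
    (fun t ht => (hasDerivAt_pinskerGap (hS' t ht).1.1 (hS' t ht).1.2).hasDerivWithinAt)
    (fun t ht => (hasDerivAt_pinskerGap_deriv (hS' t ht).1.1 (hS' t ht).1.2).hasDerivWithinAt)
    (fun t ht => ?_)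
  obtain ⟨⟨ht0, ht1⟩, htS⟩ := hS' t ht
  rw [inv_add_inv_one_sub_sub_eq_div ht0 ht1]
  exact div_nonpos_of_nonpos_of_nonneg (sub_nonpos.2 (hcS t htS)) (mul_pos ht0 (sub_pos.2 ht1)).le

lemma pinskerGap_self : pinskerGap a c a = 0 := by
  simp [pinskerGap, binKL]

lemma hasDerivAt_pinskerGap_self (ha0 : 0 < a) (ha1 : a < 1) :
    HasDerivAt (pinskerGap a c) 0 a :=
  (hasDerivAt_pinskerGap ha0 ha1).congr_deriv (by ring)

lemma pinskerGap_one_sub_self (ha : a < 1 / 2) :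
    pinskerGap a ((log (1 - a) - log a) / (1 - 2 * a)) (1 - a) = 0 := by
  have hc := div_mul_cancel₀ (log (1 - a) - log a) (by linarith : 1 - 2 * a ≠ 0)
  simp only [pinskerGap, binKL, sub_sub_cancel]
  linear_combination (2 * a - 1) * hc

lemma hasDerivAt_pinskerGap_one_sub_self (ha0 : 0 < a) (ha : a < 1 / 2) :
    HasDerivAt (pinskerGap a ((log (1 - a) - log a) / (1 - 2 * a))) 0 (1 - a) := by
  have hc := div_mul_cancel₀ (log (1 - a) - log a) (by linarith : 1 - 2 * a ≠ 0)
  refine (hasDerivAt_pinskerGap (by linarith) (by linarith)).congr_deriv ?_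
  simp only [sub_sub_cancel]
  linear_combination -2 * hc

end PinskerGap

theorem mul_sq_le_binKL_of_lt_half {a p : ℝ} (ha0 : 0 < a) (ha : a < 1 / 2) (hp0 : 0 < p)
    (hp1 : p < 1) : log ((1 - a) / a) / (1 - 2 * a) * (p - a) ^ 2 ≤ binKL a p := by
  rw [log_div (by linarith) ha0.ne']
  set c := (log (1 - a) - log a) / (1 - 2 * a)
  have hc : c * (1 - 2 * a) = log (1 - a) - log a := div_mul_cancel₀ _ (by linarith)
  have hy : 1 - 2 * a < 1 := by linarith
  have hL : log (1 - a) - log a = log (1 + (1 - 2 * a)) - log (1 - (1 - 2 * a)) := by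
    rw [← log_div (by linarith) ha0.ne', ← log_div (by linarith) (by linarith)]
    congr 1
    field_simp
    ring
  have hc2 : 2 ≤ c := by
    rw [le_div_iff₀ (by linarith), hL]
    linarith [two_mul_le_log_one_add_sub_log_one_sub (by linarith : 0 ≤ 1 - 2 * a) hy]
  have hca : 2 * c * (a * (1 - a)) ≤ 1 := by
    have h := log_one_add_sub_log_one_sub_le (by linarith : 0 ≤ 1 - 2 * a) hy
    rw [← hL, le_div_iff₀ (by nlinarith)] at h
    refine le_of_mul_le_mul_right ?_ (by linarith : 0 < 1 - 2 * a)
    rw [mul_comm 2 c, mul_assoc c, mul_comm c, mul_assoc, hc]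
    linarith
  obtain ⟨d, hd0, hd⟩ : ∃ d : ℝ, 0 ≤ d ∧ c * d ^ 2 = c - 2 :=
    ⟨√((c - 2) / c), sqrt_nonneg _, by
      rw [sq_sqrt (div_nonneg (by linarith) (by linarith))]; field_simp⟩
  have hda : d ≤ 1 - 2 * a := by
    refine (pow_le_pow_iff_left₀ hd0 (by linarith) two_ne_zero).1 ?_
    refine le_of_mul_le_mul_left ?_ (by linarith : 0 < c)
    nlinarith
  have hconvex : ∀ t, d ^ 2 ≤ (1 - 2 * t) ^ 2 → 2 * c * (t * (1 - t)) ≤ 1 := fun t ht => by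
    nlinarith [mul_le_mul_of_nonneg_left ht (by linarith : (0 : ℝ) ≤ c)]
  have hconcave : ∀ t, (1 - 2 * t) ^ 2 ≤ d ^ 2 → 1 ≤ 2 * c * (t * (1 - t)) := fun t ht => by
    nlinarith [mul_le_mul_of_nonneg_left ht (by linarith : (0 : ℝ) ≤ c)]
  have hleft : ∀ t ∈ Ioc 0 ((1 - d) / 2), 0 ≤ pinskerGap a c t := by
    have hconv : ConvexOn ℝ (Ioc 0 ((1 - d) / 2)) (pinskerGap a c) :=
      convexOn_pinskerGap (convex_Ioc _ _) (fun t ht => ⟨ht.1, by linarith [ht.2]⟩)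
        (fun t ht => hconvex t (pow_le_pow_left₀ hd0 (by linarith [ht.2]) 2))
    intro t ht
    rw [← pinskerGap_self (a := a) (c := c)]
    exact hconv.isMinOn_of_hasDerivAt_eq_zero ⟨ha0, by linarith⟩
      (hasDerivAt_pinskerGap_self ha0 (by linarith)) ht
  have hright : ∀ t ∈ Ico ((1 + d) / 2) 1, 0 ≤ pinskerGap a c t := by
    have hconv : ConvexOn ℝ (Ico ((1 + d) / 2) 1) (pinskerGap a c) :=
      convexOn_pinskerGap (convex_Ico _ _) (fun t ht => ⟨by linarith [ht.1], ht.2⟩)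
        (fun t ht => hconvex t (by nlinarith [ht.1]))
    intro t ht
    rw [← pinskerGap_one_sub_self (a := a) ha]
    exact hconv.isMinOn_of_hasDerivAt_eq_zero ⟨by linarith, by linarith⟩
      (hasDerivAt_pinskerGap_one_sub_self ha0 ha) ht
  have hmiddle : ∀ t ∈ Icc ((1 - d) / 2) ((1 + d) / 2), 0 ≤ pinskerGap a c t := by
    have hconc : ConcaveOn ℝ (Icc ((1 - d) / 2) ((1 + d) / 2)) (pinskerGap a c) :=
      concaveOn_pinskerGap (convex_Icc _ _)
        (fun t ht => ⟨by linarith [ht.1], by linarith [ht.2]⟩)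
        (fun t ht => hconcave t (sq_le_sq' (by linarith [ht.2]) (by linarith [ht.1])))
    intro t ht
    refine le_trans (le_min (hleft _ ⟨by linarith, le_rfl⟩) (hright _ ⟨le_rfl, by linarith⟩))
      (hconc.ge_on_segment (left_mem_Icc.2 (by linarith)) (right_mem_Icc.2 (by linarith)) ?_)
    rwa [segment_eq_Icc (by linarith)]
  have hgap : 0 ≤ pinskerGap a c p := by
    rcases le_or_gt p ((1 - d) / 2) with h₁ | h₁
    · exact hleft p ⟨hp0, h₁⟩
    rcases le_or_gt ((1 + d) / 2) p with h₂ | h₂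
    · exact hright p ⟨h₂, hp1⟩
    · exact hmiddle p ⟨h₁.le, h₂.le⟩
  rwa [pinskerGap, sub_nonneg] at hgap

theorem mul_sq_le_binKL_of_half_le {a p : ℝ} (ha : 1 / 2 ≤ a) (hap : a ≤ p) (hp1 : p < 1) :
    1 / (2 * a * (1 - a)) * (p - a) ^ 2 ≤ binKL a p := by
  have ha1 : a < 1 := hap.trans_lt hp1
  have haa : 0 < 2 * a * (1 - a) := by nlinarith
  have hconv : ConvexOn ℝ (Ico a 1) (pinskerGap a (1 / (2 * a * (1 - a)))) := by
    refine convexOn_pinskerGap (convex_Ico _ _) (fun t ht => ⟨by linarith [ht.1], ht.2⟩)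
      (fun t ht => ?_)
    rw [mul_one_div, div_mul_eq_mul_div, div_le_one haa]
    nlinarith [ht.1]
  have hgap : pinskerGap a _ a ≤ pinskerGap a _ p := hconv.isMinOn_of_hasDerivAt_eq_zero
    ⟨le_rfl, ha1⟩ (hasDerivAt_pinskerGap_self (by linarith) ha1) ⟨hap, hp1⟩
  rwa [pinskerGap_self, pinskerGap, sub_nonneg] at hgap

noncomputable def bernoulliTilt (a s : ℝ) : ℝ := a * exp s / (a * exp s + (1 - a))

lemma log_mgf_eq_sub_binKL {a : ℝ} (ha0 : 0 < a) (ha1 : a < 1) (s : ℝ) :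
    log (a * exp ((1 - a) * s) + (1 - a) * exp (-(a * s)))
      = (bernoulliTilt a s - a) * s - binKL a (bernoulliTilt a s) := by
  have hD : 0 < a * exp s + (1 - a) := by have := exp_pos s; nlinarith
  have hmgf : a * exp ((1 - a) * s) + (1 - a) * exp (-(a * s))
      = exp (-(a * s)) * (a * exp s + (1 - a)) := by
    rw [show (1 - a) * s = s + -(a * s) by ring, exp_add]
    ring
  have h1p : 1 - bernoulliTilt a s = (1 - a) / (a * exp s + (1 - a)) := by
    rw [bernoulliTilt]; field_simp; ring
  rw [hmgf, log_mul (exp_pos _).ne' hD.ne', log_exp, binKL, h1p, bernoulliTilt,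
    log_div (by positivity) hD.ne', log_div (by linarith) hD.ne',
    log_mul ha0.ne' (exp_pos s).ne', log_exp]
  field_simp
  ring

theorem log_mgf_le_of_mul_sq_le_binKL {a c s : ℝ} (ha0 : 0 < a) (ha1 : a < 1) (hc : 0 < c)
    (hKL : ∀ p, a ≤ p → p < 1 → c * (p - a) ^ 2 ≤ binKL a p) (hs : 0 ≤ s) :
    log (a * exp ((1 - a) * s) + (1 - a) * exp (-(a * s))) ≤ s ^ 2 / (4 * c) := by
  have hD : 0 < a * exp s + (1 - a) := by have := exp_pos s; nlinarith
  have hap : a ≤ bernoulliTilt a s := by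
    rw [bernoulliTilt, le_div_iff₀ hD]
    nlinarith [one_le_exp hs, mul_pos ha0 (sub_pos.2 ha1)]
  have hp1 : bernoulliTilt a s < 1 := by
    rw [bernoulliTilt, div_lt_one hD]
    linarith
  have hKLp := hKL _ hap hp1
  rw [log_mgf_eq_sub_binKL ha0 ha1, le_div_iff₀ (by positivity)]
  nlinarith [sq_nonneg (s - 2 * c * (bernoulliTilt a s - a))]

section KearnsSaul

variable {g h : ℝ}

lemma ksPhi_pos (hg : 0 < g) (hh : 0 < h) : 0 < ksPhi g h := by
  unfold ksPhi
  split_ifs with hgh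
  · have : 0 < log (h / g) := log_pos ((one_lt_div hg).2 hgh)
    have : 0 < h ^ 2 - g ^ 2 := by nlinarith
    positivity
  · positivity

lemma psiB_eq_log_mgf (hg : 0 < g) (hh : 0 < h) (l : ℝ) :
    psiB g h l = 1 / (g * h) * log (g / (g + h) * exp ((1 - g / (g + h)) * ((g + h) * l))
      + (1 - g / (g + h)) * exp (-(g / (g + h) * ((g + h) * l)))) := by
  have hgh : g + h ≠ 0 := by positivity
  have h1 : 1 - g / (g + h) = h / (g + h) := by field_simp; ring
  have e : ∀ x, x / (g + h) * ((g + h) * l) = x * l := fun x => by field_simp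
  rw [psiB, h1, e, e]
  ring_nf

lemma mul_sq_le_binKL_ksPhi (hg : 0 < g) (hh : 0 < h) (p : ℝ) (hap : g / (g + h) ≤ p)
    (hp1 : p < 1) :
    (g + h) ^ 2 / (2 * ksPhi g h) * (p - g / (g + h)) ^ 2 ≤ binKL (g / (g + h)) p := by
  have hgh : 0 < g + h := by positivity
  unfold ksPhi
  split_ifs with hlt
  · convert mul_sq_le_binKL_of_lt_half (a := g / (g + h)) (by positivity) ?_
      ((div_pos hg hgh).trans_le hap) hp1 using 2
    · have hL : 0 < log (h / g) := log_pos ((one_lt_div hg).2 hlt)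
      rw [show (1 - g / (g + h)) / (g / (g + h)) = h / g by field_simp; ring,
        show 1 - 2 * (g / (g + h)) = (h - g) / (g + h) by field_simp; ring,
        show h ^ 2 - g ^ 2 = (h - g) * (g + h) by ring]
      field_simp [(sub_pos.2 hlt).ne', hL.ne']
    · rw [div_lt_iff₀ hgh]; linarith
  · convert mul_sq_le_binKL_of_half_le (a := g / (g + h)) ?_ hap hp1 using 2
    · rw [show 1 - g / (g + h) = h / (g + h) by field_simp; ring]
      field_simp
    · rw [le_div_iff₀ hgh]; linarith

lemma psiB_two_mul_of_exp_eq (hg : 0 < g) (hh : 0 < h) {t : ℝ}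
    (ht : exp ((g + h) * t) = h / g) : psiB g h (2 * t) = (h - g) * t / (g * h) := by
  have hsum : g * exp (h * (2 * t)) + h * exp (-(g * (2 * t)))
      = (g + h) * exp ((h - g) * t) := by
    rw [show h * (2 * t) = (h - g) * t + (g + h) * t by ring,
      show -(g * (2 * t)) = (h - g) * t - (g + h) * t by ring, exp_add, exp_sub, ht]
    field_simp
    ring
  rw [psiB, hsum, mul_div_cancel_left₀ _ (by positivity : g + h ≠ 0), log_exp]
  ring

end KearnsSaul

/-- Kearns-Saul sharpening of Hoeffding's lemma: for `g, h > 0`,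
`ψ_{B,g,h} λ ≤ (φ(g,h)/(gh)) · λ²/2` for all `λ ≥ 0`, with equality at
`λ = (h−g)/φ(g,h)` when `g < h`. -/
theorem kearns_saul (g h : ℝ) (hg : 0 < g) (hh : 0 < h) :
    (∀ l : ℝ, 0 ≤ l → psiB g h l ≤ ksPhi g h / (g * h) * (l ^ 2 / 2)) ∧
    (g < h →
      psiB g h ((h - g) / ksPhi g h)
        = ksPhi g h / (g * h) * (((h - g) / ksPhi g h) ^ 2 / 2)) := by
  have hgh : 0 < g + h := by positivity
  have hφ := ksPhi_pos hg hh
  refine ⟨fun l hl => ?_, fun hlt => ?_⟩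
  · have hmgf := log_mgf_le_of_mul_sq_le_binKL (div_pos hg hgh)
      ((div_lt_one hgh).2 (by linarith)) (by positivity) (mul_sq_le_binKL_ksPhi hg hh)
      (mul_nonneg hgh.le hl)
    calc psiB g h l = 1 / (g * h) * log _ := psiB_eq_log_mgf hg hh l
      _ ≤ 1 / (g * h) * (((g + h) * l) ^ 2 / (4 * ((g + h) ^ 2 / (2 * ksPhi g h)))) := by
        gcongr
      _ = ksPhi g h / (g * h) * (l ^ 2 / 2) := by
        field_simp
        ring
  · have hφ' : ksPhi g h = (h ^ 2 - g ^ 2) / (2 * log (h / g)) := if_pos hlt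
    have hl : (h - g) / ksPhi g h = 2 * (log (h / g) / (g + h)) := by
      rw [hφ', show h ^ 2 - g ^ 2 = (h - g) * (g + h) by ring, div_div_eq_mul_div,
        mul_div_mul_left _ _ (sub_pos.2 hlt).ne', mul_div_assoc]
    have hexp : exp ((g + h) * (log (h / g) / (g + h))) = h / g := by
      rw [mul_div_cancel₀ _ hgh.ne', exp_log (by positivity)]
    rw [hl, psiB_two_mul_of_exp_eq hg hh hexp, hφ']
    field_simp
    ring
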